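/- Let p ≥ 3 and let G be a group with elements x_1, ..., x_p such that: [x_1, x_i] = x_{i+1} for 2 ≤ i ≤ p−1, x_1 commutes with x_p, and x_i commutes with x_j for all 2 ≤ i, j ≤ p. Then for all natural numbers a, b and all 2 ≤ i ≤ p−1: [x_1^a, x_i^b] = x_{i+1}^{C(a,1)b} · x_{i+2}^{−C(a,2)b} · x_{i+3}^{C(a,3)b} · ... · x_p^{(−1)^{p+i+1} C(a,p−i) b}, where C(a,j) denotes the binomial coefficient. -/
import Mathlib

section ModelFiliform

variable {G : Type*} [Group G]

/-- Product `x (i+1) ^ e 0 * x (i+2) ^ e 1 * ⋯ * x (i+n) ^ e (n-1)`. -/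
private def LP (x : ℕ → G) (i n : ℕ) (e : ℕ → ℤ) : G :=
  ((List.range n).map fun m => x (i + 1 + m) ^ e m).prod

private lemma LP_succ (x : ℕ → G) (i n : ℕ) (e : ℕ → ℤ) :
    LP x i (n + 1) e = LP x i n e * x (i + 1 + n) ^ e n := by
  simp [LP, List.range_succ]

private lemma LP_congr (x : ℕ → G) (i n : ℕ) {e f : ℕ → ℤ} (h : ∀ m < n, e m = f m) :
    LP x i n e = LP x i n f := by
  unfold LP
  congr 1
  apply List.map_congr_left
  intro m hm
  rw [h m (List.mem_range.mp hm)]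

private lemma LP_cons (x : ℕ → G) (i n : ℕ) (e : ℕ → ℤ) :
    LP x i (n + 1) e = x (i + 1) ^ e 0 * LP x (i + 1) n (fun m => e (m + 1)) := by
  simp only [LP, List.range_succ_eq_map, List.map_cons, List.map_map, List.prod_cons,
    Nat.add_zero]
  congr 2
  apply List.map_congr_left
  intro m _
  simp only [Function.comp_apply, Nat.succ_eq_add_one]
  congr 2
  omega

private lemma commute_LP (x : ℕ → G) (p : ℕ)
    (hcomm : ∀ i j, 2 ≤ i → i ≤ p → 2 ≤ j → j ≤ p → x i * x j = x j * x i)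
    {j : ℕ} (h2j : 2 ≤ j) (hjp : j ≤ p) {i n : ℕ} (h1i : 1 ≤ i) (hin : i + n ≤ p)
    (e : ℕ → ℤ) (t : ℤ) :
    Commute (x j ^ t) (LP x i n e) := by
  apply Commute.list_prod_right
  intro y hy
  simp only [List.mem_map, List.mem_range] at hy
  obtain ⟨m, hm, rfl⟩ := hy
  have h : Commute (x j) (x (i + 1 + m)) :=
    hcomm j (i + 1 + m) h2j hjp (by omega) (by omega)
  exact h.zpow_zpow t (e m)

private lemma LP_add (x : ℕ → G) (p : ℕ)
    (hcomm : ∀ i j, 2 ≤ i → i ≤ p → 2 ≤ j → j ≤ p → x i * x j = x j * x i)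
    {i n : ℕ} (h1i : 1 ≤ i) (hin : i + n ≤ p)
    (e f g : ℕ → ℤ) (hg : ∀ m < n, g m = e m + f m) :
    LP x i n g = LP x i n e * LP x i n f := by
  induction n with
  | zero => simp [LP]
  | succ n ih =>
    have hc : Commute (x (i + 1 + n) ^ e n) (LP x i n f) :=
      commute_LP x p hcomm (by omega) (by omega) h1i (by omega) f (e n)
    rw [LP_succ, LP_succ, LP_succ, ih (by omega) (fun m hm => hg m (by omega)),
      hg n (by omega), zpow_add]
    simp only [mul_assoc]
    rw [← mul_assoc (LP x i n f), ← hc.eq, mul_assoc]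

private lemma LP_one (x : ℕ → G) (i n : ℕ) (e : ℕ → ℤ) (h : ∀ m < n, e m = 0) :
    LP x i n e = 1 := by
  induction n with
  | zero => simp [LP]
  | succ n ih =>
    rw [LP_succ, ih (fun m hm => h m (by omega)), h n (by omega)]
    simp

private lemma LP_inv (x : ℕ → G) (p : ℕ)
    (hcomm : ∀ i j, 2 ≤ i → i ≤ p → 2 ≤ j → j ≤ p → x i * x j = x j * x i)
    {i n : ℕ} (h1i : 1 ≤ i) (hin : i + n ≤ p) (e : ℕ → ℤ) :
    (LP x i n e)⁻¹ = LP x i n (fun m => - e m) := by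
  have h1 : LP x i n (fun _ => (0 : ℤ)) = LP x i n e * LP x i n (fun m => - e m) :=
    LP_add x p hcomm h1i hin _ _ _ (by intro m _; ring)
  have h2 : LP x i n e * LP x i n (fun m => - e m) = 1 := by
    rw [← h1]; exact LP_one x i n _ (by intro m _; rfl)
  exact inv_eq_of_mul_eq_one_right h2

private lemma LP_pow (x : ℕ → G) (p : ℕ)
    (hcomm : ∀ i j, 2 ≤ i → i ≤ p → 2 ≤ j → j ≤ p → x i * x j = x j * x i)
    {i n : ℕ} (h1i : 1 ≤ i) (hin : i + n ≤ p) (e : ℕ → ℤ) (b : ℕ) :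
    (LP x i n e) ^ b = LP x i n (fun m => (b : ℤ) * e m) := by
  induction b with
  | zero =>
    rw [pow_zero]
    symm
    exact LP_one x i n _ (by intro m _; simp)
  | succ b ih =>
    rw [pow_succ, ih]
    exact (LP_add x p hcomm h1i hin _ _ _ (by intro m _; push_cast; ring)).symm

private lemma LP_head_absorb (x : ℕ → G) (i n : ℕ) (e : ℕ → ℤ) (t : ℤ) (hn : 1 ≤ n) :
    x (i + 1) ^ t * LP x i n e
      = LP x i n (fun m => if m = 0 then t + e 0 else e m) := by
  obtain ⟨k, rfl⟩ : ∃ k, n = k + 1 := ⟨n - 1, by omega⟩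
  rw [LP_cons, LP_cons, ← mul_assoc, ← zpow_add, if_pos rfl]
  exact congrArg _ (LP_congr _ _ _ (by intro m _; simp))

private lemma conj_zpow' (g h : G) (t : ℤ) : (g⁻¹ * h * g) ^ t = g⁻¹ * h ^ t * g := by
  have := conj_zpow (i := t) (a := g⁻¹) (b := h)
  rwa [inv_inv] at this

private lemma conj_mul' (g A B : G) :
    g⁻¹ * (A * B) * g = (g⁻¹ * A * g) * (g⁻¹ * B * g) := by group

private lemma LP_conj (x : ℕ → G) (p : ℕ)
    (hrel : ∀ i, 2 ≤ i → i ≤ p - 1 → (x 1)⁻¹ * (x i)⁻¹ * x 1 * x i = x (i + 1))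
    (hcomm1 : x 1 * x p = x p * x 1)
    (hcomm : ∀ i j, 2 ≤ i → i ≤ p → 2 ≤ j → j ≤ p → x i * x j = x j * x i) :
    ∀ n i, 1 ≤ i → i + n = p → ∀ e : ℕ → ℤ,
      (x 1)⁻¹ * LP x i n e * x 1
        = LP x i n (fun m => e m - if m = 0 then 0 else e (m - 1)) := by
  intro n
  induction n with
  | zero => intro i _ _ e; simp [LP]
  | succ n ih =>
    intro i h1i hip e
    rw [LP_cons, conj_mul', ← conj_zpow', ih (i + 1) (by omega) (by omega)]
    rcases Nat.lt_or_ge (i + 1) p with hp | hp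
    · -- i + 1 < p, hence n ≥ 1
      have hn1 : 1 ≤ n := by omega
      have hkey : (x 1)⁻¹ * x (i + 1) * x 1 = x (i + 1) * (x (i + 1 + 1))⁻¹ := by
        have h := hrel (i + 1) (by omega) (by omega)
        rw [← h]; group
      have hcc : Commute (x (i + 1)) (x (i + 1 + 1)) :=
        hcomm (i + 1) (i + 1 + 1) (by omega) (by omega) (by omega) (by omega)
      have hc : Commute (x (i + 1)) ((x (i + 1 + 1))⁻¹) := hcc.inv_right
      rw [hkey, hc.mul_zpow, inv_zpow, ← zpow_neg, mul_assoc,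
        LP_head_absorb x (i + 1) n _ (- e 0) hn1, LP_cons]
      congr 1
      · simp
      apply LP_congr
      intro m _
      cases m with
      | zero => simp; omega
      | succ k => simp
    · -- i + 1 = p, hence n = 0
      have hip' : i + 1 = p := by omega
      have hn0 : n = 0 := by omega
      subst hn0
      have hkey : (x 1)⁻¹ * x (i + 1) * x 1 = x (i + 1) := by
        rw [mul_assoc, hip', ← hcomm1, ← mul_assoc, inv_mul_cancel, one_mul]
      rw [hkey]
      simp [LP, List.range_succ]

private lemma conj_x_pow (x : ℕ → G) (p : ℕ)
    (hrel : ∀ i, 2 ≤ i → i ≤ p - 1 → (x 1)⁻¹ * (x i)⁻¹ * x 1 * x i = x (i + 1))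
    (hcomm1 : x 1 * x p = x p * x 1)
    (hcomm : ∀ i j, 2 ≤ i → i ≤ p → 2 ≤ j → j ≤ p → x i * x j = x j * x i)
    (a : ℕ) :
    ∀ j, 1 ≤ j → j + 1 ≤ p - 1 →
      (x 1 ^ a)⁻¹ * x (j + 1) * x 1 ^ a
        = LP x j (p - j) (fun m => (-1 : ℤ) ^ m * (a.choose m : ℤ)) := by
  induction a with
  | zero =>
    intro j h1 h2
    simp only [pow_zero, inv_one, one_mul, mul_one]
    obtain ⟨k, hk⟩ : ∃ k, p - j = k + 1 := ⟨p - j - 1, by omega⟩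
    rw [hk, LP_cons,
      LP_one x (j + 1) k _ (by intro m _; simp [Nat.choose_zero_succ])]
    simp
  | succ a ih =>
    intro j h1 h2
    have hstep : (x 1 ^ (a + 1))⁻¹ * x (j + 1) * x 1 ^ (a + 1)
        = (x 1)⁻¹ * ((x 1 ^ a)⁻¹ * x (j + 1) * x 1 ^ a) * x 1 := by
      rw [pow_succ]; group
    rw [hstep, ih j h1 h2,
      LP_conj x p hrel hcomm1 hcomm (p - j) j h1 (by omega)]
    apply LP_congr
    intro m hm
    cases m with
    | zero => simp
    | succ k =>
      simp only [if_neg (Nat.succ_ne_zero k), Nat.add_sub_cancel]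
      rw [Nat.choose_succ_succ]
      push_cast
      ring

end ModelFiliform

/-- Let `p ≥ 3` and let `G` contain `x 1, …, x p` with `[x 1, x i] = x (i+1)` for
`2 ≤ i ≤ p-1` (commutator convention `[g,h] = g⁻¹h⁻¹gh`), `x 1` commuting with
`x p`, and `x i` commuting with `x j` for all `2 ≤ i, j ≤ p`.  Then for all
naturals `a`, `b` and all `2 ≤ i ≤ p-1`,
`[x 1 ^ a, x i ^ b] = x_{i+1}^{C(a,1)b} · x_{i+2}^{-C(a,2)b} · x_{i+3}^{C(a,3)b}
  ⋯ x_p^{(-1)^{p+i+1} C(a,p-i) b}`,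
where the `(m+1)`-st factor (for `0 ≤ m ≤ p-i-1`) is
`x (i+1+m) ^ ((-1)^m · C(a, m+1) · b)`. -/
theorem commutator_pow_model_filiform {G : Type*} [Group G]
    (p : ℕ) (hp : 3 ≤ p) (x : ℕ → G)
    (hrel : ∀ i, 2 ≤ i → i ≤ p - 1 → (x 1)⁻¹ * (x i)⁻¹ * x 1 * x i = x (i + 1))
    (hcomm1 : x 1 * x p = x p * x 1)
    (hcomm : ∀ i j, 2 ≤ i → i ≤ p → 2 ≤ j → j ≤ p → x i * x j = x j * x i) :
    ∀ (a b : ℕ) (i : ℕ), 2 ≤ i → i ≤ p - 1 →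
      (x 1 ^ a)⁻¹ * (x i ^ b)⁻¹ * x 1 ^ a * x i ^ b
        = ((List.range (p - i)).map fun m =>
            x (i + 1 + m) ^ ((-1 : ℤ) ^ m * (Nat.choose a (m + 1) : ℤ) * (b : ℤ))).prod := by
  intro a b i h2i hip
  obtain ⟨j, rfl⟩ : ∃ j, i = j + 1 := ⟨i - 1, by omega⟩
  have h1j : 1 ≤ j := by omega
  have hA := conj_x_pow x p hrel hcomm1 hcomm a j h1j hip
  have hpj : p - j = (p - (j + 1)) + 1 := by omega
  set n := p - (j + 1) with hn
  rw [hpj, LP_cons] at hA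
  simp only [pow_zero, Nat.choose_zero_right, Nat.cast_one, one_mul, mul_one, zpow_one] at hA
  -- hA : (x 1 ^ a)⁻¹ * x (j+1) * x 1 ^ a = x (j+1) * LP x (j+1) n (fun m => (-1)^(m+1) * C(a,m+1))
  have hgoal : ((List.range (p - (j + 1))).map fun m =>
      x (j + 1 + 1 + m) ^ ((-1 : ℤ) ^ m * (Nat.choose a (m + 1) : ℤ) * (b : ℤ))).prod
      = LP x (j + 1) n (fun m => (-1 : ℤ) ^ m * (Nat.choose a (m + 1) : ℤ) * (b : ℤ)) := rfl
  rw [hgoal]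
  have hbz : (x (j + 1) ^ b)⁻¹ = x (j + 1) ^ (-(b : ℤ)) := by
    rw [zpow_neg, zpow_natCast]
  have hconj : (x 1 ^ a)⁻¹ * x (j + 1) ^ (-(b : ℤ)) * x 1 ^ a
      = ((x 1 ^ a)⁻¹ * x (j + 1) * x 1 ^ a) ^ (-(b : ℤ)) := (conj_zpow' _ _ _).symm
  have hcS : Commute (x (j + 1)) (LP x (j + 1) n (fun m => (-1 : ℤ) ^ (m + 1) * (a.choose (m + 1) : ℤ))) := by
    have := commute_LP x p hcomm (j := j + 1) (by omega) (by omega) (i := j + 1) (n := n)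
      (by omega) (by omega) (fun m => (-1 : ℤ) ^ (m + 1) * (a.choose (m + 1) : ℤ)) 1
    rwa [zpow_one] at this
  calc (x 1 ^ a)⁻¹ * (x (j + 1) ^ b)⁻¹ * x 1 ^ a * x (j + 1) ^ b
      = ((x 1 ^ a)⁻¹ * x (j + 1) ^ (-(b : ℤ)) * x 1 ^ a) * x (j + 1) ^ (b : ℤ) := by
        rw [hbz, zpow_natCast]
    _ = ((x 1 ^ a)⁻¹ * x (j + 1) * x 1 ^ a) ^ (-(b : ℤ)) * x (j + 1) ^ (b : ℤ) := by
        rw [hconj]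
    _ = (x (j + 1) * LP x (j + 1) n (fun m => (-1 : ℤ) ^ (m + 1) * (a.choose (m + 1) : ℤ))) ^ (-(b : ℤ))
          * x (j + 1) ^ (b : ℤ) := by rw [hA]
    _ = x (j + 1) ^ (-(b : ℤ)) * (LP x (j + 1) n (fun m => (-1 : ℤ) ^ (m + 1) * (a.choose (m + 1) : ℤ))) ^ (-(b : ℤ))
          * x (j + 1) ^ (b : ℤ) := by rw [hcS.mul_zpow]
    _ = (LP x (j + 1) n (fun m => (-1 : ℤ) ^ (m + 1) * (a.choose (m + 1) : ℤ))) ^ (-(b : ℤ)) := by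
        rw [mul_assoc, (hcS.symm.zpow_zpow (-(b : ℤ)) (b : ℤ)).eq, ← mul_assoc, ← zpow_add,
          neg_add_cancel, zpow_zero, one_mul]
    _ = LP x (j + 1) n (fun m => (-1 : ℤ) ^ m * (Nat.choose a (m + 1) : ℤ) * (b : ℤ)) := by
        rw [zpow_neg, zpow_natCast,
          LP_pow x p hcomm (by omega) (by omega : j + 1 + n ≤ p),
          LP_inv x p hcomm (by omega) (by omega : j + 1 + n ≤ p)]
        apply LP_congr
        intro m _
        ring
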